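/- Let $x_1 < \dots < x_n$ with $x_1 \geq 0$, $n \geq 2$, probabilities $q_k \in (0,1)$ summing to 1, $\lambda > 0$, and let $\mu = \sum_k q_k x_k$. If $x^* \in (x_n - \lambda, x_n)$ satisfies $x^* = \lambda \sum_{k=1}^n \frac{q_k x_k}{\lambda + x^* - x_k}$, then $x^* > \mu$. -/

import Mathlib

/-!
With `c = λ + x*`, the fixed-point equation reads `x* = ∑ q_k f(x_k)` for `f t = λ t / (c - t)`,
which is strictly convex on `t < c` since `λ c > 0`. As the `x_k` are not all equal, strict Jensen
gives `f μ < x*`, i.e. `λ μ < x* (c - μ)`, which rearranges to `0 < (x* - μ) c`.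
-/

open Set

theorem strictConvexOn_mul_div_sub {lam c : ℝ} (h : 0 < lam * c) :
    StrictConvexOn ℝ (Iio c) fun t => lam * t / (c - t) := by
  refine ⟨convex_Iio c, fun x hx y hy hxy a b ha hb hab => ?_⟩
  obtain rfl : b = 1 - a := by linarith
  have hu : 0 < c - x := sub_pos.2 hx
  have hv : 0 < c - y := sub_pos.2 hy
  have hw : 0 < c - (a * x + (1 - a) * y) := by nlinarith
  have gap : a * (lam * x / (c - x)) + (1 - a) * (lam * y / (c - y))
        - lam * (a * x + (1 - a) * y) / (c - (a * x + (1 - a) * y))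
      = a * (1 - a) * (lam * c) * (x - y) ^ 2
        / ((c - x) * (c - y) * (c - (a * x + (1 - a) * y))) := by
    field_simp
    ring
  have gap_pos : 0 < a * (1 - a) * (lam * c) * (x - y) ^ 2
      / ((c - x) * (c - y) * (c - (a * x + (1 - a) * y))) := by
    have hxy' := sub_ne_zero.2 hxy
    positivity
  simp only [smul_eq_mul]
  linarith

theorem lt_of_mul_div_sub_lt {lam m s : ℝ} (hc : 0 < lam + s) (hm : m < lam + s)
    (h : lam * m / (lam + s - m) < s) : m < s := by
  rw [div_lt_iff₀ (by linarith)] at h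
  nlinarith

/-- The heritable-risk growth rate strictly exceeds the mean birth rate. -/
theorem stmt_2 (n : ℕ) (hn : 2 ≤ n) (x q : Fin n → ℝ)
    (hx : StrictMono x) (hx0 : 0 ≤ x ⟨0, by omega⟩)
    (hq : ∀ k, q k ∈ Set.Ioo (0 : ℝ) 1) (hqsum : ∑ k, q k = 1)
    (lam : ℝ) (hlam : 0 < lam) (xs : ℝ)
    (hmem : xs ∈ Set.Ioo (x ⟨n - 1, by omega⟩ - lam) (x ⟨n - 1, by omega⟩))
    (heq : xs = lam * ∑ k, q k * x k / (lam + xs - x k)) :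
    xs > ∑ k, q k * x k := by
  have hfirst_lt_last : x ⟨0, by omega⟩ < x ⟨n - 1, by omega⟩ := hx (Fin.mk_lt_mk.2 (by omega))
  have hx_lt : ∀ k, x k < lam + xs := fun k =>
    (hx.monotone (Fin.mk_le_mk.2 (by omega) : k ≤ ⟨n - 1, by omega⟩)).trans_lt
      (by linarith [hmem.1])
  have hc : 0 < lam + xs := by linarith [hx_lt ⟨0, by omega⟩]
  have hmean_lt : ∑ k, q k • x k ∈ Iio (lam + xs) :=
    (convex_Iio _).sum_mem (fun k _ => (hq k).1.le) hqsum fun k _ => hx_lt k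
  have hjensen := (strictConvexOn_mul_div_sub (mul_pos hlam hc)).map_sum_lt
    (fun k _ => (hq k).1) hqsum (fun k _ => hx_lt k)
    ⟨_, Finset.mem_univ _, _, Finset.mem_univ _, hfirst_lt_last.ne⟩
  have hxs : ∑ k, q k • (lam * x k / (lam + xs - x k)) = xs := by
    conv_rhs => rw [heq, Finset.mul_sum]
    exact Finset.sum_congr rfl fun k _ => by rw [smul_eq_mul]; ring
  simp only [smul_eq_mul, mem_Iio] at hjensen hxs hmean_lt
  exact lt_of_mul_div_sub_lt hc hmean_lt (hjensen.trans_eq hxs)
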